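/- Let G be a strongly connected digraph with n ≥ 3 vertices, m arcs, maximum outdegree Δ⁺ and minimum outdegree δ⁺. Then q(G) ≤ max{ Δ⁺ + δ⁺ − 1 + (m − δ⁺(n−1))/Δ⁺ , δ⁺ + 1 + (m − δ⁺(n−1))/2 }. -/

import Mathlib

open Matrix Finset

/-- Spectral radius of a complex square matrix: the largest modulus of its eigenvalues. -/
noncomputable def specRad {n : ℕ} (M : Matrix (Fin n) (Fin n) ℂ) : ℝ :=
  sSup {x : ℝ | ∃ μ ∈ spectrum ℂ M, x = ‖μ‖}

/-- Spectral radius of a real square matrix (via its complex eigenvalues). -/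
noncomputable def specRadR {n : ℕ} (M : Matrix (Fin n) (Fin n) ℝ) : ℝ :=
  specRad (M.map Complex.ofReal)

/-- Adjacency matrix of a digraph given by its arc relation. -/
def adjM {n : ℕ} (E : Fin n → Fin n → Prop) [DecidableRel E] :
    Matrix (Fin n) (Fin n) ℝ := fun i j => if E i j then 1 else 0

/-- Outdegree of vertex `i`. -/
def outdeg {n : ℕ} (E : Fin n → Fin n → Prop) [DecidableRel E] (i : Fin n) : ℕ :=
  (Finset.univ.filter (fun j => E i j)).card

/-- Signless Laplacian `Q(G) = D(G) + A(G)`. -/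
noncomputable def Qmat {n : ℕ} (E : Fin n → Fin n → Prop) [DecidableRel E] :
    Matrix (Fin n) (Fin n) ℝ :=
  Matrix.diagonal (fun i => (outdeg E i : ℝ)) + adjM E

/-- Signless Laplacian spectral radius `q(G)`. -/
noncomputable def qG {n : ℕ} (E : Fin n → Fin n → Prop) [DecidableRel E] : ℝ :=
  specRadR (Qmat E)

/-- Average 2-outdegree `m_i^+`. -/
noncomputable def m2 {n : ℕ} (E : Fin n → Fin n → Prop) [DecidableRel E] (i : Fin n) : ℝ :=
  (∑ j ∈ Finset.univ.filter (fun j => E i j), (outdeg E j : ℝ)) / (outdeg E i : ℝ)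

/-- The finset of arcs of the digraph. -/
def arcs {n : ℕ} (E : Fin n → Fin n → Prop) [DecidableRel E] : Finset (Fin n × Fin n) :=
  Finset.univ.filter (fun p => E p.1 p.2)

/-- Strong connectivity of a digraph. -/
def StrongConn {n : ℕ} (E : Fin n → Fin n → Prop) : Prop :=
  ∀ i j : Fin n, Relation.ReflTransGen E i j

/-- Irreducibility of a square matrix: the digraph of nonzero entries is strongly connected. -/
def MatIrred {n : ℕ} {α : Type*} [Zero α] (M : Matrix (Fin n) (Fin n) α) : Prop :=
  ∀ i j : Fin n, i ≠ j → Relation.TransGen (fun a b => M a b ≠ 0) i j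

/-! Test the signless Laplacian against the outdegree vector `d`, which is positive by strong
connectivity. Row `i` of `Q d` is `dᵢ² + ∑_{j ∈ N⁺(i)} dⱼ`; bounding the outdegrees outside
`N⁺(i) ∪ {i}` below by `δ` gives `∑_{j ∈ N⁺(i)} dⱼ ≤ t + (δ - 1) dᵢ` with `t = m - δ(n - 1)`, so
`(Q d)ᵢ ≤ (dᵢ + t / dᵢ + δ - 1) dᵢ`. On `[2, Δ]` the function `x ↦ x + t / x` is largest at an
endpoint, which handles `dᵢ ≥ 2`; for `dᵢ = 1` the trivial bound `∑_{j ∈ N⁺(i)} dⱼ ≤ Δ` suffices.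
Hence `Q d ≤ R d` for the claimed bound `R`, and since `Q ≥ 0` and `d > 0` this bounds every
eigenvalue of `Q` by `R`. -/

theorem norm_le_of_mulVec_eq_smul {ι : Type*} [Fintype ι] {M : Matrix ι ι ℝ} {w : ι → ℝ}
    {R : ℝ} (hM : ∀ i j, 0 ≤ M i j) (hw : ∀ i, 0 < w i) (hMw : M *ᵥ w ≤ R • w)
    {μ : ℂ} {v : ι → ℂ} (hv : v ≠ 0) (hμ : M.map Complex.ofReal *ᵥ v = μ • v) : ‖μ‖ ≤ R := by
  obtain ⟨i₀, hi₀⟩ := Function.ne_iff.mp hv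
  obtain ⟨u, -, hu⟩ := exists_max_image univ (fun i => ‖v i‖ / w i) ⟨i₀, mem_univ i₀⟩
  have hvu : 0 < ‖v u‖ := by
    have := (div_pos (norm_pos_iff.mpr hi₀) (hw i₀)).trans_le (hu i₀ (mem_univ _))
    exact (div_pos_iff_of_pos_right (hw u)).mp this
  have hv_le : ∀ j, ‖v j‖ ≤ ‖v u‖ / w u * w j := fun j =>
    (div_le_iff₀ (hw j)).mp (hu j (mem_univ j))
  refine le_of_mul_le_mul_right ?_ hvu
  calc ‖μ‖ * ‖v u‖ = ‖∑ j, (M u j : ℂ) * v j‖ := by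
        have hμu := congrFun hμ u
        simp only [mulVec, dotProduct, map_apply, Pi.smul_apply, smul_eq_mul] at hμu
        rw [← norm_mul, hμu]
    _ ≤ ∑ j, M u j * ‖v j‖ := by
        refine (norm_sum_le _ _).trans_eq (sum_congr rfl fun j _ => ?_)
        rw [norm_mul, Complex.norm_real, Real.norm_of_nonneg (hM u j)]
    _ ≤ ∑ j, M u j * (‖v u‖ / w u * w j) := by
        gcongr with j; exacts [hM u j, hv_le j]
    _ = ‖v u‖ / w u * (M *ᵥ w) u := by
        simp only [mulVec, dotProduct, mul_sum]
        exact sum_congr rfl fun j _ => by ring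
    _ ≤ ‖v u‖ / w u * (R * w u) :=
        mul_le_mul_of_nonneg_left (hMw u) (div_nonneg (norm_nonneg _) (hw u).le)
    _ = R * ‖v u‖ := by field_simp [(hw u).ne']

theorem exists_mulVec_eq_smul_of_mem_spectrum {ι K : Type*} [Fintype ι] [DecidableEq ι] [Field K]
    {A : Matrix ι ι K} {μ : K} (hμ : μ ∈ spectrum K A) : ∃ v ≠ 0, A *ᵥ v = μ • v := by
  rw [← Matrix.spectrum_toLin'] at hμ
  obtain ⟨v, hv, hv0⟩ := (Module.End.HasEigenvalue.of_mem_spectrum hμ).exists_hasEigenvector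
  exact ⟨v, hv0, by simpa using Module.End.mem_eigenspace_iff.mp hv⟩

theorem specRadR_le_of_mulVec_le {n : ℕ} {M : Matrix (Fin n) (Fin n) ℝ} {w : Fin n → ℝ} {R : ℝ}
    (hM : ∀ i j, 0 ≤ M i j) (hw : ∀ i, 0 < w i) (hMw : M *ᵥ w ≤ R • w) (hR : 0 ≤ R) :
    specRadR M ≤ R := by
  refine Real.sSup_le ?_ hR
  rintro _ ⟨μ, hμ, rfl⟩
  obtain ⟨v, hv, hvμ⟩ := exists_mulVec_eq_smul_of_mem_spectrum hμ
  exact norm_le_of_mulVec_eq_smul hM hw hMw hv hvμ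

theorem sum_add_card_compl_mul_le_sum {ι : Type*} [Fintype ι] [DecidableEq ι] {f : ι → ℝ} {δ : ℝ}
    (hf : ∀ j, δ ≤ f j) (s : Finset ι) :
    ∑ j ∈ s, f j + ((Fintype.card ι : ℝ) - #s) * δ ≤ ∑ j, f j := by
  rw [← sum_add_sum_compl s f, ← Nat.cast_sub (card_le_univ s), ← card_compl]
  gcongr
  simpa using card_nsmul_le_sum sᶜ f δ fun j _ => hf j

theorem add_div_le_max_of_mem_Icc {a b d t : ℝ} (ha : 0 < a) (had : a ≤ d) (hdb : d ≤ b) :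
    d + t / d ≤ max (a + t / a) (b + t / b) := by
  have hd : 0 < d := ha.trans_le had
  have hb : 0 < b := hd.trans_le hdb
  rcases le_or_gt t (a * d) with ht | ht
  · refine le_max_of_le_right ?_
    rw [add_div' _ _ _ hd.ne', add_div' _ _ _ hb.ne', div_le_div_iff₀ hd hb]
    nlinarith [mul_le_mul_of_nonneg_right had hd.le, mul_nonneg (sub_nonneg.2 hdb) hd.le]
  · refine le_max_of_le_left ?_
    rw [add_div' _ _ _ hd.ne', add_div' _ _ _ ha.ne', div_le_div_iff₀ hd ha]
    nlinarith [mul_nonneg (sub_nonneg.2 had) (sub_nonneg.2 ht.le)]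

theorem mul_self_add_le_max_mul {d : ℕ} {S δ Δ t : ℝ} (hd : 1 ≤ d) (hδ : 1 ≤ δ) (hdΔ : d ≤ Δ)
    (htΔ : Δ ≤ t) (hS : S ≤ t + (δ - 1) * d) (hS' : S ≤ Δ * d) :
    d * d + S ≤ max (Δ + δ - 1 + t / Δ) (δ + 1 + t / 2) * d := by
  rcases hd.eq_or_lt with rfl | hd
  · have hΔ : 0 < Δ := one_pos.trans_le (by exact_mod_cast hdΔ)
    have htΔ' : 1 ≤ t / Δ := (le_div_iff₀ hΔ).2 (by linarith)
    push_cast at hS' ⊢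
    nlinarith [le_max_left (Δ + δ - 1 + t / Δ) (δ + 1 + t / 2)]
  · have hd2 : (2 : ℝ) ≤ d := by exact_mod_cast hd
    have hd0 : (0 : ℝ) < d := two_pos.trans_le hd2
    have hconv := add_div_le_max_of_mem_Icc (t := t) two_pos hd2 hdΔ
    have hmax : d + t / d + (δ - 1) ≤ max (Δ + δ - 1 + t / Δ) (δ + 1 + t / 2) :=
      (le_max_iff.mp hconv).elim (fun h => le_max_of_le_right (by linarith))
        (fun h => le_max_of_le_left (by linarith))
    calc (d : ℝ) * d + S ≤ (d + t / d + (δ - 1)) * d := by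
          rw [add_mul, add_mul, div_mul_cancel₀ _ hd0.ne']; linarith
      _ ≤ _ := mul_le_mul_of_nonneg_right hmax hd0.le

section Digraph

variable {n : ℕ} {E : Fin n → Fin n → Prop} [DecidableRel E]

theorem one_le_outdeg (hn : 2 ≤ n) (hsc : StrongConn E) (i : Fin n) : 1 ≤ outdeg E i := by
  have : Nontrivial (Fin n) := Fin.nontrivial_iff_two_le.mpr hn
  obtain ⟨j, hji⟩ := exists_ne i
  rcases (hsc i j).cases_head with hij | ⟨k, hik, -⟩
  · exact absurd hij.symm hji
  · exact card_pos.mpr ⟨k, mem_filter.mpr ⟨mem_univ k, hik⟩⟩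

theorem outdeg_add_mul_le_sum {δ : ℕ} (hδ : ∀ j, δ ≤ outdeg E j) (i : Fin n) :
    (outdeg E i : ℝ) + (n - 1) * δ ≤ ∑ j, (outdeg E j : ℝ) := by
  simpa using sum_add_card_compl_mul_le_sum (f := fun j => (outdeg E j : ℝ))
    (fun j => Nat.cast_le.mpr (hδ j)) {i}

theorem sum_outdeg_filter_le_sub {δ : ℕ} (hloop : ∀ i, ¬ E i i) (hδ : ∀ j, δ ≤ outdeg E j)
    (i : Fin n) :
    ∑ j ∈ univ.filter (E i), (outdeg E j : ℝ)
      ≤ ∑ j, (outdeg E j : ℝ) - δ * (n - 1) + (δ - 1) * outdeg E i := by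
  have hi : i ∉ univ.filter (E i) := by simp [hloop i]
  have h := sum_add_card_compl_mul_le_sum (f := fun j => (outdeg E j : ℝ))
    (fun j => Nat.cast_le.mpr (hδ j)) (insert i (univ.filter (E i)))
  rw [sum_insert hi, card_insert_of_notMem hi] at h
  simp only [Fintype.card_fin, Nat.cast_add, Nat.cast_one] at h
  change _ + (_ - ((outdeg E i : ℝ) + 1)) * _ ≤ _ at h
  linarith

theorem sum_outdeg_filter_le_mul {Δ : ℕ} (hΔ : ∀ j, outdeg E j ≤ Δ) (i : Fin n) :
    ∑ j ∈ univ.filter (E i), (outdeg E j : ℝ) ≤ Δ * outdeg E i := by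
  calc ∑ j ∈ univ.filter (E i), (outdeg E j : ℝ) ≤ ∑ _j ∈ univ.filter (E i), (Δ : ℝ) :=
        sum_le_sum fun j _ => Nat.cast_le.mpr (hΔ j)
    _ = Δ * outdeg E i := by rw [sum_const, nsmul_eq_mul, mul_comm]; rfl

theorem Qmat_nonneg (i j : Fin n) : 0 ≤ Qmat E i j := by
  simp only [Qmat, Matrix.add_apply, diagonal_apply, adjM]
  split_ifs <;> positivity

theorem Qmat_mulVec_outdeg (i : Fin n) :
    (Qmat E *ᵥ fun j => (outdeg E j : ℝ)) i
      = outdeg E i * outdeg E i + ∑ j ∈ univ.filter (E i), (outdeg E j : ℝ) := by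
  rw [Qmat, add_mulVec, Pi.add_apply, mulVec_diagonal]
  simp only [mulVec, dotProduct, adjM, ite_mul, one_mul, zero_mul, sum_ite, sum_const_zero, add_zero]

end Digraph

/-- `q(G) ≤ max{Δ⁺+δ⁺−1+(m−δ⁺(n−1))/Δ⁺, δ⁺+1+(m−δ⁺(n−1))/2}`. -/
theorem stmt_4 {n : ℕ} (hn : 3 ≤ n) (E : Fin n → Fin n → Prop) [DecidableRel E]
    (hloop : ∀ i, ¬ E i i) (hsc : StrongConn E)
    (m Δ δ : ℕ) (hm : m = ∑ i, outdeg E i)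
    (hΔ : IsGreatest (Set.range (outdeg E)) Δ)
    (hδ : IsLeast (Set.range (outdeg E)) δ) :
    qG E ≤ max ((Δ : ℝ) + δ - 1 + ((m : ℝ) - δ * (n - 1)) / Δ)
              ((δ : ℝ) + 1 + ((m : ℝ) - δ * (n - 1)) / 2) := by
  have hpos : ∀ i, 1 ≤ outdeg E i := one_le_outdeg (by omega) hsc
  have hle : ∀ i, outdeg E i ≤ Δ := fun i => hΔ.2 ⟨i, rfl⟩
  have hge : ∀ i, δ ≤ outdeg E i := fun i => hδ.2 ⟨i, rfl⟩
  obtain ⟨u, hu⟩ := hΔ.1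
  obtain ⟨v, hv⟩ := hδ.1
  have hmR : (m : ℝ) = ∑ i, (outdeg E i : ℝ) := by rw [hm]; push_cast; rfl
  have hδ1 : (1 : ℝ) ≤ δ := by exact_mod_cast hv ▸ hpos v
  have hΔ0 : (0 : ℝ) ≤ Δ := Δ.cast_nonneg
  have htΔ : (Δ : ℝ) ≤ m - δ * (n - 1) := by
    have := outdeg_add_mul_le_sum hge u
    rw [hu, ← hmR] at this
    linarith
  refine specRadR_le_of_mulVec_le Qmat_nonneg (w := fun i => (outdeg E i : ℝ))
    (fun i => by exact_mod_cast hpos i) (fun i => ?_) ?_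
  · have hS := sum_outdeg_filter_le_sub hloop hge i
    rw [← hmR] at hS
    rw [Qmat_mulVec_outdeg, Pi.smul_apply, smul_eq_mul]
    exact mul_self_add_le_max_mul (hpos i) hδ1 (by exact_mod_cast hle i) htΔ (by linarith)
      (sum_outdeg_filter_le_mul hle i)
  · exact le_max_of_le_left (by linarith [div_nonneg (hΔ0.trans htΔ) hΔ0])
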